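/- arXiv:1909.07004 — 3 statements merged into one kernel-verified Lean document; each statement's English description precedes it below -/
import Mathlib

section
/- For any complex numbers a_1, …, a_N and any 1 ≤ M ≤ N, one has |Σ_{n=1}^M a_n| ≪ Σ_{j=−N}^{N} (1/(|j|+1)) · |Σ_{n=1}^N a_n e(jn/N)|, with an absolute implied constant. -/
/-- `ee t = e(t) = exp(2πit)`. -/
noncomputable def ee (t : ℝ) : ℂ := Complex.exp (2 * Real.pi * Complex.I * t)

/-!
Discrete Fourier inversion on `ZMod N` writes `N · ∑_{m ≤ M} a_m` as `∑_x b(x) T(x)`, where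
`T(x) = ∑_{n ≤ N} a_n e(xn/N)` are the complete twisted sums and `b(x) = ∑_{m ≤ M} e(-xm/N)` is an
incomplete geometric sum. Summing the geometric series gives `|b(x)| ≤ 1 / |sin(π x/N)|`, and by
Jordan's inequality this is at most `N / (|x| + 1)` once `x` is represented by `|x| ≤ N/2`
(`ZMod.valMinAbs`). These representatives lie in `[-N, N]`, which gives the claim with `C = 1`.
-/

open Finset ZMod Real

lemma norm_geom_sum_Ico_mul_norm_sub_one_le {z : ℂ} (hz : ‖z‖ = 1) {m n : ℕ} (hmn : m ≤ n) :
    ‖∑ i ∈ Ico m n, z ^ i‖ * ‖z - 1‖ ≤ 2 := by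
  rw [← norm_mul, geom_sum_Ico_mul z hmn]
  calc ‖z ^ n - z ^ m‖ ≤ ‖z ^ n‖ + ‖z ^ m‖ := norm_sub_le _ _
    _ = 2 := by rw [norm_pow, norm_pow, hz]; norm_num

lemma two_mul_abs_le_abs_sin_pi_mul {t : ℝ} (ht : |t| ≤ 1 / 2) : 2 * |t| ≤ |sin (π * t)| := by
  have h := mul_abs_le_abs_sin (x := π * t) (by
    rw [abs_mul, abs_of_pos pi_pos]; nlinarith [pi_pos])
  rwa [abs_mul, abs_of_pos pi_pos, ← mul_assoc, div_mul_cancel₀ _ pi_pos.ne'] at h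

section ZModFourier

variable {N : ℕ}

lemma natCast_injOn_Icc_one : Set.InjOn (Nat.cast : ℕ → ZMod N) (Icc 1 N) := by
  intro m hm n hn h
  simp only [coe_Icc, Set.mem_Icc] at hm hn
  exact ((ZMod.natCast_eq_natCast_iff _ _ _).1 h).eq_of_abs_lt (by rw [abs_lt]; omega)

variable [NeZero N]

lemma norm_stdAddChar_intCast_sub_one (j : ℤ) :
    ‖stdAddChar (j : ZMod N) - 1‖ = 2 * |sin (π * (j / N))| := by
  rw [stdAddChar_coe, show 2 * π * Complex.I * j / N = Complex.I * ((2 * π * (j / N) : ℝ) : ℂ) by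
    push_cast; ring, Complex.norm_exp_I_mul_ofReal_sub_one, norm_mul, Real.norm_eq_abs,
    Real.norm_eq_abs]
  congr 3 <;> [norm_num; ring]

lemma abs_valMinAbs_div_le_half (x : ZMod N) : |(x.valMinAbs / N : ℝ)| ≤ 1 / 2 := by
  have hN : (0 : ℝ) < N := by exact_mod_cast Nat.pos_of_neZero N
  have hx : (2 * |x.valMinAbs| : ℤ) ≤ N := by
    have := x.natAbs_valMinAbs_le
    rw [Int.abs_eq_natAbs]; omega
  rw [abs_div, abs_of_pos hN, div_le_iff₀ hN]
  have : (2 * |(x.valMinAbs : ℝ)|) ≤ N := by exact_mod_cast hx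
  linarith

lemma sum_stdAddChar_neg_mul_mul_stdAddChar_mul {m n : ℕ} (hm : m ∈ Icc 1 N) (hn : n ∈ Icc 1 N) :
    ∑ x : ZMod N, stdAddChar (-(x * (m : ZMod N))) * stdAddChar (x * (n : ZMod N)) =
      if n = m then (N : ℂ) else 0 := by
  simp_rw [← AddChar.map_add_eq_mul, show ∀ x : ZMod N, -(x * m) + x * n = x * (n - m) by
    intro x; ring]
  simp [AddChar.sum_mulShift _ (isPrimitive_stdAddChar N), sub_eq_zero,
    natCast_injOn_Icc_one.eq_iff hn hm]

lemma natCast_mul_sum_eq_sum_stdAddChar {s : Finset ℕ} (hs : s ⊆ Icc 1 N) (a : ℕ → ℂ) :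
    (N : ℂ) * ∑ m ∈ s, a m = ∑ x : ZMod N, (∑ m ∈ s, stdAddChar (-(x * (m : ZMod N)))) *
      ∑ n ∈ Icc 1 N, a n * stdAddChar (x * (n : ZMod N)) := by
  symm
  calc _ = ∑ m ∈ s, ∑ n ∈ Icc 1 N, a n * ∑ x : ZMod N,
          stdAddChar (-(x * (m : ZMod N))) * stdAddChar (x * (n : ZMod N)) := by
        simp_rw [sum_mul_sum, mul_sum]
        rw [sum_comm]
        refine sum_congr rfl fun m _ => ?_
        rw [sum_comm]
        exact sum_congr rfl fun n _ => sum_congr rfl fun x _ => by ring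
    _ = ∑ m ∈ s, a m * N := by
        refine sum_congr rfl fun m hm => ?_
        rw [sum_congr rfl fun n hn => by rw [sum_stdAddChar_neg_mul_mul_stdAddChar_mul (hs hm) hn]]
        simp only [mul_ite, mul_zero, sum_ite_eq', if_pos (hs hm)]
    _ = _ := by rw [mul_sum]; exact sum_congr rfl fun m _ => mul_comm _ _

lemma norm_sum_Icc_stdAddChar_mul_le {M : ℕ} (hM : M ≤ N) (x : ZMod N) :
    ‖∑ m ∈ Icc 1 M, stdAddChar (x * (m : ZMod N))‖ ≤ N / (|x.valMinAbs| + 1 : ℝ) := by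
  rcases eq_or_ne x 0 with rfl | hx
  · simpa using hM
  have hN : (0 : ℝ) < N := by exact_mod_cast Nat.pos_of_neZero N
  rw [Int.cast_abs]
  have hj : (1 : ℝ) ≤ |(x.valMinAbs : ℝ)| := by
    exact_mod_cast Int.one_le_abs ((valMinAbs_eq_zero x).not.2 hx)
  set j : ℝ := (x.valMinAbs : ℝ)
  have hsub : 2 * (2 * (|j| / N)) ≤ ‖stdAddChar x - 1‖ := by
    have := two_mul_abs_le_abs_sin_pi_mul (abs_valMinAbs_div_le_half x)
    rw [abs_div, abs_of_pos hN] at this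
    rw [← coe_valMinAbs x, norm_stdAddChar_intCast_sub_one]
    gcongr
  have hgeom : ‖∑ m ∈ Icc 1 M, stdAddChar (x * (m : ZMod N))‖ * ‖stdAddChar x - 1‖ ≤ 2 := by
    rw [← Ico_add_one_right_eq_Icc]
    simp_rw [mul_comm x, ← nsmul_eq_mul, AddChar.map_nsmul_eq_pow]
    exact norm_geom_sum_Ico_mul_norm_sub_one_le (AddChar.norm_apply _ x) (by omega)
  set S := ‖∑ m ∈ Icc 1 M, stdAddChar (x * (m : ZMod N))‖
  rw [le_div_iff₀ (by positivity)]
  calc S * (|j| + 1) ≤ S * (2 * |j|) := by gcongr; linarith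
    _ = S * (2 * (2 * (|j| / N))) * N / 2 := by field_simp
    _ ≤ S * ‖stdAddChar x - 1‖ * N / 2 := by gcongr
    _ ≤ 2 * N / 2 := by gcongr
    _ = N := by ring

lemma norm_sum_Icc_le_sum_stdAddChar {M : ℕ} (hM : M ≤ N) (a : ℕ → ℂ) :
    ‖∑ m ∈ Icc 1 M, a m‖ ≤ ∑ x : ZMod N,
      1 / (|x.valMinAbs| + 1 : ℝ) * ‖∑ n ∈ Icc 1 N, a n * stdAddChar (x * (n : ZMod N))‖ := by
  have hN : (0 : ℝ) < N := by exact_mod_cast Nat.pos_of_neZero N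
  refine le_of_mul_le_mul_left ?_ hN
  calc (N : ℝ) * ‖∑ m ∈ Icc 1 M, a m‖
      = ‖∑ x : ZMod N, (∑ m ∈ Icc 1 M, stdAddChar (-x * (m : ZMod N))) *
          ∑ n ∈ Icc 1 N, a n * stdAddChar (x * (n : ZMod N))‖ := by
        simp_rw [neg_mul, ← natCast_mul_sum_eq_sum_stdAddChar (Icc_subset_Icc_right hM), norm_mul,
          Complex.norm_natCast]
    _ ≤ ∑ x : ZMod N, N / (|x.valMinAbs| + 1 : ℝ) *
          ‖∑ n ∈ Icc 1 N, a n * stdAddChar (x * (n : ZMod N))‖ := by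
        refine (norm_sum_le _ _).trans (sum_le_sum fun x _ => ?_)
        rw [norm_mul, ← (abs_valMinAbs_eq_abs_valMinAbs (a := -x)).2 (Or.inr rfl)]
        gcongr
        exact norm_sum_Icc_stdAddChar_mul_le hM (-x)
    _ = _ := by rw [mul_sum]; simp_rw [← mul_assoc, mul_one_div]

lemma sum_valMinAbs_le_sum_Icc {g : ℤ → ℝ} (hg : ∀ j, 0 ≤ g j) :
    ∑ x : ZMod N, g x.valMinAbs ≤ ∑ j ∈ Icc (-(N : ℤ)) N, g j := by
  rw [← sum_image injective_valMinAbs.injOn]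
  refine sum_le_sum_of_subset_of_nonneg (fun j hj => ?_) fun j _ _ => hg j
  obtain ⟨x, -, rfl⟩ := mem_image.1 hj
  have := x.natAbs_valMinAbs_le
  rw [mem_Icc]
  omega

lemma ee_intCast_mul_natCast_div (j : ℤ) (n : ℕ) :
    ee (j * n / N) = stdAddChar ((j : ZMod N) * (n : ZMod N)) := by
  rw [ee, show (j : ZMod N) * (n : ZMod N) = ((j * n : ℤ) : ZMod N) by push_cast; rfl,
    stdAddChar_coe]
  push_cast
  ring_nf

end ZModFourier

theorem completion_lemma :
    ∃ C : ℝ, 0 < C ∧ ∀ (N M : ℕ) (a : ℕ → ℂ), 1 ≤ M → M ≤ N →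
      ‖∑ n ∈ Finset.Icc 1 M, a n‖
        ≤ C * ∑ j ∈ Finset.Icc (-(N : ℤ)) (N : ℤ),
            (1 / (|j| + 1 : ℝ)) *
              ‖∑ n ∈ Finset.Icc 1 N, a n * ee ((j : ℝ) * n / N)‖ := by
  refine ⟨1, one_pos, fun N M a hM hMN => ?_⟩
  have : NeZero N := ⟨by omega⟩
  rw [one_mul]
  refine (norm_sum_Icc_le_sum_stdAddChar hMN a).trans ?_
  refine le_of_eq_of_le (sum_congr rfl fun x _ => ?_) (sum_valMinAbs_le_sum_Icc (g := fun j : ℤ =>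
    1 / (|j| + 1 : ℝ) * ‖∑ n ∈ Icc 1 N, a n * ee ((j : ℝ) * n / N)‖) fun j => by positivity)
  simp only [ee_intCast_mul_natCast_div, coe_valMinAbs]
end

section
/- Let 0 < τ < min{α, β, |β − α|}. For any word u ∈ Σ_n and any m ∈ ℕ there exists a word v ∈ {1,2}^m such that for every x ∈ Σ beginning with the word uv, one has {S_j(x)} ∉ (0, τ) for all n < j ≤ n + m. -/
/-!
Greedy construction: from the current partial sum `f`, append the letter `α` unless
`{f + α}` falls into `(0, τ)`, in which case append `β`. This never lands in `(0, τ)`: if both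
`{f + α}` and `{f + β}` did, `α - β` would lie within `τ` of an integer, which
`τ < |β - α| < 1 - τ` rules out.
-/

noncomputable def Sab (α β : ℝ) (x : ℕ → Bool) (n : ℕ) : ℝ :=
  ∑ i ∈ Finset.range n, (if x i then α else β)

namespace Sab

variable {α β τ : ℝ}

lemma exists_int_abs_sub_lt_of_fract_add_mem_Ioo {f : ℝ}
    (ha : Int.fract (f + α) ∈ Set.Ioo 0 τ) (hb : Int.fract (f + β) ∈ Set.Ioo 0 τ) :
    ∃ k : ℤ, |α - β - k| < τ := by
  refine ⟨⌊f + α⌋ - ⌊f + β⌋, ?_⟩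
  have hdiff : α - β - ((⌊f + α⌋ - ⌊f + β⌋ : ℤ) : ℝ) = Int.fract (f + α) - Int.fract (f + β) := by
    push_cast [Int.fract]; ring
  rw [hdiff, abs_sub_lt_iff]
  constructor <;> linarith [ha.1, ha.2, hb.1, hb.2]

lemma fract_add_notMem_Ioo_of_fract_add_mem_Ioo (hτ₁ : τ < |β - α|) (hτ₂ : |β - α| < 1 - τ)
    {f : ℝ} (ha : Int.fract (f + α) ∈ Set.Ioo 0 τ) : Int.fract (f + β) ∉ Set.Ioo 0 τ := by
  intro hb
  obtain ⟨k, hk⟩ := exists_int_abs_sub_lt_of_fract_add_mem_Ioo ha hb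
  rw [abs_sub_comm] at hτ₁ hτ₂
  have hk_abs : |(k : ℝ)| ≤ |α - β| + |α - β - k| :=
    calc |(k : ℝ)| = |(α - β) - (α - β - k)| := by ring_nf
      _ ≤ |α - β| + |α - β - k| := abs_sub _ _
  rcases eq_or_ne k 0 with rfl | hk0
  · simp only [Int.cast_zero, sub_zero] at hk
    linarith
  · have : (1 : ℝ) ≤ |(k : ℝ)| := by exact_mod_cast Int.one_le_abs hk0
    linarith

variable (α β τ)

noncomputable def avoidLetter (f : ℝ) : Bool :=
  decide (Int.fract (f + α) ∉ Set.Ioo 0 τ)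

noncomputable def avoidStep (f : ℝ) : ℝ :=
  f + if avoidLetter α τ f then α else β

variable {α β τ}

lemma fract_avoidStep_notMem_Ioo (hτ₁ : τ < |β - α|) (hτ₂ : |β - α| < 1 - τ) (f : ℝ) :
    Int.fract (avoidStep α β τ f) ∉ Set.Ioo 0 τ := by
  by_cases h : Int.fract (f + α) ∈ Set.Ioo 0 τ
  · simpa [avoidStep, avoidLetter, h] using fract_add_notMem_Ioo_of_fract_add_mem_Ioo hτ₁ hτ₂ h
  · simp [avoidStep, avoidLetter, h]

lemma succ (x : ℕ → Bool) (n : ℕ) : Sab α β x (n + 1) = Sab α β x n + if x n then α else β :=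
  Finset.sum_range_succ _ n

lemma eq_sum_fin {n : ℕ} {x : ℕ → Bool} {u : Fin n → Bool} (hu : ∀ i : Fin n, x i = u i) :
    Sab α β x n = ∑ i : Fin n, if u i then α else β := by
  rw [Sab, ← Fin.sum_univ_eq_sum_range (fun i => if x i then α else β)]
  simp only [hu]

lemma add_eq_iterate_avoidStep {x : ℕ → Bool} {n k : ℕ}
    (hx : ∀ i < k, x (n + i) = avoidLetter α τ ((avoidStep α β τ)^[i] (Sab α β x n))) :
    Sab α β x (n + k) = (avoidStep α β τ)^[k] (Sab α β x n) := by
  induction k with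
  | zero => rfl
  | succ k ih =>
    rw [← add_assoc, succ, ih fun i hi => hx i (by omega), Function.iterate_succ_apply',
      hx k (by omega), avoidStep]

end Sab

open Sab in
theorem avoid_interval_lemma_general
    (α β : ℝ) (hα : α ∈ Set.Ioo (0:ℝ) 1) (hβ : β ∈ Set.Ioo (0:ℝ) 1)
    (τ : ℝ) (hτα : τ < α) (hτβ : τ < β) (hτab : τ < |β - α|) :
    ∀ (n : ℕ) (u : Fin n → Bool) (m : ℕ), ∃ v : Fin m → Bool,
      ∀ x : ℕ → Bool, (∀ i : Fin n, x (i : ℕ) = u i) →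
        (∀ i : Fin m, x (n + (i : ℕ)) = v i) →
        ∀ j : ℕ, n < j → j ≤ n + m → Int.fract (Sab α β x j) ∉ Set.Ioo 0 τ := by
  have hτab' : |β - α| < 1 - τ := by
    rw [abs_sub_lt_iff]; constructor <;> linarith [hα.2, hβ.2]
  intro n u m
  set s₀ : ℝ := ∑ i : Fin n, if u i then α else β
  refine ⟨fun i => avoidLetter α τ ((avoidStep α β τ)^[i] s₀), ?_⟩
  intro x hxu hxv j hnj hjm
  obtain ⟨k, rfl⟩ : ∃ k, j = n + (k + 1) := ⟨j - n - 1, by omega⟩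
  have hs₀ : Sab α β x n = s₀ := eq_sum_fin hxu
  rw [add_eq_iterate_avoidStep (β := β) fun i hi => hs₀ ▸ hxv ⟨i, by omega⟩,
    Function.iterate_succ_apply']
  exact fract_avoidStep_notMem_Ioo hτab hτab' _

theorem avoid_interval_lemma
    (α β : ℝ) (hα : α ∈ Set.Ioo (0:ℝ) 1) (hβ : β ∈ Set.Ioo (0:ℝ) 1)
    (hirr : Irrational α ∨ Irrational β)
    (τ : ℝ) (hτ : 0 < τ) (hτα : τ < α) (hτβ : τ < β) (hτab : τ < |β - α|) :
    ∀ (n : ℕ) (u : Fin n → Bool) (m : ℕ), ∃ v : Fin m → Bool,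
      ∀ x : ℕ → Bool, (∀ i : Fin n, x (i : ℕ) = u i) →
        (∀ i : Fin m, x (n + (i : ℕ)) = v i) →
        ∀ j : ℕ, n < j → j ≤ n + m → Int.fract (Sab α β x j) ∉ Set.Ioo 0 τ :=
  avoid_interval_lemma_general α β hα hβ τ hτα hτβ hτab
end

section
/- Let ε > 0, let τ = 1/q for an integer q ≥ 2 with τ < min{α, β, |β−α|}, and partition [0,1) into q intervals I_1, …, I_q of length τ. For any word u ∈ {1,2}^n with nε > 10, there exist v ∈ {1,2}^{⌊εn⌋} and an index k such that for every x beginning with uv: {S_j(x)} ∉ I_k for all n < j ≤ n + ⌊εn⌋, and h(x, I_k, n+⌊εn⌋)/(n+⌊εn⌋) ≤ τ/(1+ε/2). -/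
open scoped Classical in
/-- The hitting count `h(x, I, N) = #{1 ≤ j ≤ N : {S_j(x)} ∈ I}` for `I = [a, b)`. -/
noncomputable def hitCount (α β : ℝ) (x : ℕ → Bool) (a b : ℝ) (N : ℕ) : ℕ :=
  ((Finset.Icc 1 N).filter fun j => Int.fract (Sab α β x j) ∈ Set.Ico a b).card

namespace AvoidAux

open scoped Classical

lemma avoid_step {α β τ a : ℝ} (hα1 : α < 1) (hβ1 : β < 1)
    (hτα : τ < α) (hτβ : τ < β) (hτab : τ < |β - α|) (s : ℝ)
    (h1 : Int.fract (s + α) ∈ Set.Ico a (a + τ))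
    (h2 : Int.fract (s + β) ∈ Set.Ico a (a + τ)) : False := by
  obtain ⟨h1a, h1b⟩ := h1
  obtain ⟨h2a, h2b⟩ := h2
  have key : Int.fract (s + α) - Int.fract (s + β)
      = α - β - ((⌊s + α⌋ - ⌊s + β⌋ : ℤ) : ℝ) := by
    simp only [Int.fract]
    push_cast
    ring
  have hab := abs_lt.mp (show |β - α| < 1 - τ by
    rw [abs_lt]; constructor <;> linarith)
  have hz0 : (⌊s + α⌋ - ⌊s + β⌋ : ℤ) = 0 := by
    have hr1 : ((⌊s + α⌋ - ⌊s + β⌋ : ℤ) : ℝ) < 1 := by linarith [hab.1]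
    have hr2 : (-1 : ℝ) < ((⌊s + α⌋ - ⌊s + β⌋ : ℤ) : ℝ) := by linarith [hab.2]
    have h1' : (⌊s + α⌋ - ⌊s + β⌋ : ℤ) < 1 := by exact_mod_cast hr1
    have h2' : (-1 : ℤ) < (⌊s + α⌋ - ⌊s + β⌋ : ℤ) := by exact_mod_cast hr2
    omega
  rw [hz0] at key
  push_cast at key
  rcases lt_abs.mp hτab with h | h
  · linarith
  · linarith

/-- Greedy choice of the next letter avoiding the interval `[a, b)`. -/
noncomputable def greedyPick (α β a b : ℝ) (s : ℝ) : Bool :=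
  if Int.fract (s + α) ∈ Set.Ico a b then false else true

lemma greedyPick_avoid {α β τ a : ℝ} (hα1 : α < 1) (hβ1 : β < 1)
    (hτα : τ < α) (hτβ : τ < β) (hτab : τ < |β - α|) (s : ℝ) :
    Int.fract (s + if greedyPick α β a (a + τ) s then α else β)
      ∉ Set.Ico a (a + τ) := by
  by_cases h : Int.fract (s + α) ∈ Set.Ico a (a + τ)
  · simp only [greedyPick, if_pos h, Bool.false_eq_true, if_neg]
    exact fun h2 => avoid_step hα1 hβ1 hτα hτβ hτab s h h2
  · simpa only [greedyPick, if_neg h, if_pos] using h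

/-- The sequence of partial sums obtained by picking letters according to `pick`. -/
noncomputable def runSum (α β : ℝ) (pick : ℕ → ℝ → Bool) : ℕ → ℝ
  | 0 => 0
  | i + 1 => runSum α β pick i + (if pick i (runSum α β pick i) then α else β)

/-- The sequence of letters obtained by picking according to `pick`. -/
noncomputable def runSeq (α β : ℝ) (pick : ℕ → ℝ → Bool) (i : ℕ) : Bool :=
  pick i (runSum α β pick i)

lemma Sab_runSeq (α β : ℝ) (pick : ℕ → ℝ → Bool) (j : ℕ) :
    Sab α β (runSeq α β pick) j = runSum α β pick j := by
  induction j with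
  | zero => simp [Sab, runSum]
  | succ i ih =>
      rw [Sab, Finset.sum_range_succ, ← Sab, ih]
      rfl

lemma Sab_congr {α β : ℝ} {x y : ℕ → Bool} {N : ℕ} (h : ∀ i < N, x i = y i) :
    ∀ j ≤ N, Sab α β x j = Sab α β y j := by
  intro j hj
  unfold Sab
  refine Finset.sum_congr rfl fun i hi => ?_
  rw [h i (lt_of_lt_of_le (Finset.mem_range.mp hi) hj)]

lemma hitCount_congr {α β a b : ℝ} {x y : ℕ → Bool} {N : ℕ}
    (h : ∀ j ≤ N, Sab α β x j = Sab α β y j) :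
    hitCount α β x a b N = hitCount α β y a b N := by
  unfold hitCount
  congr 1
  refine Finset.filter_congr fun j hj => ?_
  rw [h j (Finset.mem_Icc.mp hj).2]

end AvoidAux

open AvoidAux in
theorem avoid_some_interval_lemma
    (α β : ℝ) (hα : α ∈ Set.Ioo (0:ℝ) 1) (hβ : β ∈ Set.Ioo (0:ℝ) 1)
    (hirr : Irrational α ∨ Irrational β)
    (ε : ℝ) (hε : 0 < ε) (q : ℕ) (hq : 2 ≤ q) (τ : ℝ) (hτ : τ = 1 / q)
    (hτα : τ < α) (hτβ : τ < β) (hτab : τ < |β - α|) :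
    ∀ (n : ℕ) (u : Fin n → Bool), 10 < ε * n →
      ∃ (v : Fin ⌊ε * n⌋₊ → Bool) (k : Fin q),
        ∀ x : ℕ → Bool, (∀ i : Fin n, x (i : ℕ) = u i) →
          (∀ i : Fin ⌊ε * n⌋₊, x (n + (i : ℕ)) = v i) →
          (∀ j : ℕ, n < j → j ≤ n + ⌊ε * n⌋₊ →
            Int.fract (Sab α β x j) ∉ Set.Ico ((k : ℝ) * τ) (((k : ℕ) + 1) * τ)) ∧
          (hitCount α β x ((k : ℝ) * τ) (((k : ℕ) + 1) * τ) (n + ⌊ε * n⌋₊) : ℝ)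
              / (n + ⌊ε * n⌋₊) ≤ τ / (1 + ε / 2) := by
  classical
  intro n u hn
  have hq0 : (0 : ℝ) < q := by
    have : (0 : ℕ) < q := by omega
    exact_mod_cast this
  have hτ0 : 0 < τ := by rw [hτ]; positivity
  have hn0 : 0 < n := by
    rcases Nat.eq_zero_or_pos n with h | h
    · subst h; norm_num at hn
    · exact h
  set m := ⌊ε * n⌋₊ with hmdef
  have hεn : ε * n < m + 1 := Nat.lt_floor_add_one _
  have hm2 : ε * n / 2 ≤ (m : ℝ) := by linarith
  -- the base word
  set w : ℕ → Bool := fun i => if h : i < n then u ⟨i, h⟩ else false with hw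
  -- membership in intervals via floor
  have hiff : ∀ t : ℝ, 0 ≤ t → t < 1 → ∀ k : ℕ,
      (⌊t * q⌋₊ = k ↔ ((k : ℝ) * τ ≤ t ∧ t < ((k : ℕ) + 1) * τ)) := by
    intro t ht0 ht1 k
    rw [Nat.floor_eq_iff (by positivity)]
    constructor
    · rintro ⟨ha1, ha2⟩
      constructor
      · rw [hτ, mul_one_div, div_le_iff₀ hq0]; exact ha1
      · rw [hτ, mul_one_div, lt_div_iff₀ hq0]; exact ha2
    · rintro ⟨ha1, ha2⟩
      rw [hτ, mul_one_div, div_le_iff₀ hq0] at ha1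
      rw [hτ, mul_one_div, lt_div_iff₀ hq0] at ha2
      exact ⟨ha1, ha2⟩
  have hfl : ∀ j : ℕ, ⌊Int.fract (Sab α β w j) * q⌋₊ < q := by
    intro j
    have h0 := Int.fract_nonneg (Sab α β w j)
    have h1 := Int.fract_lt_one (Sab α β w j)
    rw [Nat.floor_lt (by positivity)]
    nlinarith
  have hcard := Finset.card_eq_sum_card_fiberwise
    (f := fun j => ⌊Int.fract (Sab α β w j) * q⌋₊) (s := Finset.Icc 1 n)
    (t := Finset.range q) (fun j _ => Finset.mem_range.mpr (hfl j))
  have hfib : ∀ k ∈ Finset.range q,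
      ((Finset.Icc 1 n).filter fun j => ⌊Int.fract (Sab α β w j) * q⌋₊ = k).card
        = hitCount α β w ((k : ℝ) * τ) (((k : ℕ) + 1) * τ) n := by
    intro k _
    unfold hitCount
    congr 1
    refine Finset.filter_congr fun j _ => ?_
    simpa [Set.mem_Ico] using
      hiff _ (Int.fract_nonneg _) (Int.fract_lt_one _) k
  have hsum : ∑ k ∈ Finset.range q,
      hitCount α β w ((k : ℝ) * τ) (((k : ℕ) + 1) * τ) n = n := by
    rw [← Finset.sum_congr rfl hfib, ← hcard, Nat.card_Icc]
    omega
  obtain ⟨k0, hk0q, hk0⟩ : ∃ k0, k0 < q ∧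
      q * hitCount α β w ((k0 : ℝ) * τ) (((k0 : ℕ) + 1) * τ) n ≤ n := by
    by_contra hcon
    push_neg at hcon
    have hlt := Finset.sum_lt_sum_of_nonempty
      (Finset.nonempty_range_iff.mpr (by omega))
      (f := fun _ : ℕ => n)
      (g := fun k : ℕ => q * hitCount α β w ((k : ℝ) * τ) (((k : ℕ) + 1) * τ) n)
      (fun k hk => hcon k (Finset.mem_range.mp hk))
    rw [Finset.sum_const, Finset.card_range, ← Finset.mul_sum, hsum,
      smul_eq_mul] at hlt
    omega
  set a : ℝ := (k0 : ℝ) * τ with ha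
  have hb : ((k0 : ℕ) + 1 : ℝ) * τ = a + τ := by rw [ha]; ring
  rw [hb] at hk0
  set pick : ℕ → ℝ → Bool := fun i s =>
    if h : i < n then u ⟨i, h⟩ else greedyPick α β a (a + τ) s with hpick
  set y : ℕ → Bool := runSeq α β pick with hy
  have hyw : ∀ i < n, y i = w i := by
    intro i hi
    simp only [hy, runSeq, hpick, hw, dif_pos hi]
  -- avoidance for y
  have havoid : ∀ j : ℕ, n < j →
      Int.fract (Sab α β y j) ∉ Set.Ico a (a + τ) := by
    intro j hj
    obtain ⟨i, rfl⟩ : ∃ i, j = i + 1 := ⟨j - 1, by omega⟩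
    rw [hy, Sab_runSeq]
    have hrun : runSum α β pick (i + 1)
        = runSum α β pick i + (if pick i (runSum α β pick i) then α else β) := by
      rw [runSum]
    rw [hrun]
    have hpi : pick i (runSum α β pick i)
        = greedyPick α β a (a + τ) (runSum α β pick i) := by
      simp only [hpick]
      rw [dif_neg (by omega)]
    rw [hpi]
    exact greedyPick_avoid hα.2 hβ.2 hτα hτβ hτab _
  refine ⟨fun i => y (n + (i : ℕ)), ⟨k0, hk0q⟩, ?_⟩
  intro x hxu hxv
  have ea : ((⟨k0, hk0q⟩ : Fin q) : ℝ) * τ = a := rfl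
  have eb : (((⟨k0, hk0q⟩ : Fin q) : ℕ) + 1 : ℝ) * τ = a + τ := by
    rw [← hb]
  rw [ea, eb]
  have hxy : ∀ i < n + m, x i = y i := by
    intro i hi
    by_cases h : i < n
    · rw [hxu ⟨i, h⟩, hyw i h]
      simp only [hw, dif_pos h]
    · have h2 : i - n < m := by omega
      have hv : x (n + (i - n)) = y (n + (i - n)) := hxv ⟨i - n, h2⟩
      rwa [show n + (i - n) = i from by omega] at hv
  have hSxy : ∀ j ≤ n + m, Sab α β x j = Sab α β y j := Sab_congr hxy
  constructor
  · intro j hj1 hj2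
    rw [hSxy j hj2]
    exact havoid j hj1
  · have h1 : hitCount α β x a (a + τ) (n + m)
        = hitCount α β y a (a + τ) (n + m) := hitCount_congr hSxy
    have h2 : hitCount α β y a (a + τ) (n + m)
        = hitCount α β y a (a + τ) n := by
      unfold hitCount
      congr 1
      ext j
      simp only [Finset.mem_filter, Finset.mem_Icc]
      constructor
      · rintro ⟨⟨hj1, hj2⟩, hP⟩
        refine ⟨⟨hj1, ?_⟩, hP⟩
        by_contra hcon
        push_neg at hcon
        exact havoid j hcon hP
      · rintro ⟨⟨hj1, hj2⟩, hP⟩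
        exact ⟨⟨hj1, by omega⟩, hP⟩
    have h3 : hitCount α β y a (a + τ) n = hitCount α β w a (a + τ) n :=
      hitCount_congr (Sab_congr hyw)
    rw [h1, h2, h3]
    -- final arithmetic
    have hqH : (q : ℝ) * (hitCount α β w a (a + τ) n : ℝ) ≤ (n : ℝ) := by
      exact_mod_cast hk0
    have hnm : (0 : ℝ) < (n : ℝ) + (m : ℝ) := by
      have : (0 : ℕ) < n + m := by omega
      exact_mod_cast this
    rw [div_le_div_iff₀ hnm (by positivity)]
    have hqτ : (q : ℝ) * τ = 1 := by
      rw [hτ]; field_simp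
    have key : (q : ℝ) * ((hitCount α β w a (a + τ) n : ℝ) * (1 + ε / 2))
        ≤ (q : ℝ) * (τ * ((n : ℝ) + (m : ℝ))) := by
      have e3 : (q : ℝ) * (τ * ((n : ℝ) + (m : ℝ))) = (n : ℝ) + (m : ℝ) := by
        rw [← mul_assoc, hqτ, one_mul]
      rw [e3]
      nlinarith [mul_le_mul_of_nonneg_right hqH
        (by positivity : (0 : ℝ) ≤ ε / 2), hm2]
    exact le_of_mul_le_mul_left key hq0
end
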